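/- (Empty cylinder lemma.) Let t, α, β be positive real numbers with t^β > 2t^α. Suppose v ∈ ℤ^{n+1} satisfies r(v) = t^{α−1−β} and h(v) = t^α. Then the half-open cylinder C = { x ∈ ℝ^{n+1} : r(x) < t and t^{−β} ≤ h(x) ≤ t^{−α} − t^{−β} } contains no integer point, i.e. C ∩ ℤ^{n+1} = ∅. -/

import Mathlib

open scoped RealInnerProductSpace

/-- The vector `(1, θ₁, …, θₙ) ∈ ℝ^{n+1}`. -/
noncomputable def thetaVec (n : ℕ) (θ : Fin n → ℝ) : EuclideanSpace ℝ (Fin (n+1)) :=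
  (EuclideanSpace.equiv (Fin (n+1)) ℝ).symm (Fin.cons 1 θ)

/-- The line `ℓ` spanned by `(1, θ₁, …, θₙ)`. -/
noncomputable def lineTheta (n : ℕ) (θ : Fin n → ℝ) :
    Submodule ℝ (EuclideanSpace ℝ (Fin (n+1))) :=
  Submodule.span ℝ {thetaVec n θ}

/-- `r(x)`: the Euclidean distance from `x` to the line `ℓ`. -/
noncomputable def rdist (n : ℕ) (θ : Fin n → ℝ) (x : EuclideanSpace ℝ (Fin (n+1))) : ℝ :=
  Metric.infDist x (lineTheta n θ : Set (EuclideanSpace ℝ (Fin (n+1))))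

/-- `h(x)`: the Euclidean distance from `x` to `ℓ^⊥`. -/
noncomputable def hdist (n : ℕ) (θ : Fin n → ℝ) (x : EuclideanSpace ℝ (Fin (n+1))) : ℝ :=
  Metric.infDist x ((lineTheta n θ)ᗮ : Set (EuclideanSpace ℝ (Fin (n+1))))

/-- `x ∈ ℤ^{n+1}`: all coordinates of `x` are integers. -/
def IsIntegerPoint (n : ℕ) (x : EuclideanSpace ℝ (Fin (n+1))) : Prop :=
  ∀ i, ∃ m : ℤ, x i = (m : ℝ)

/-!
Split `⟪x, v⟫ = ⟪Px, Pv⟫ + ⟪x - Px, v - Pv⟫` along `ℓ` and `ℓ^⊥`. Since `ℓ` is a line, the first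
term has absolute value `h(x) h(v)`, which the bounds on `h(x)` place in `[t^{α-β}, 1 - t^{α-β}]`;
by Cauchy–Schwarz the second has absolute value at most `r(x) r(v) < t^{α-β}`. Hence
`0 < |⟪x, v⟫| < 1`, which is impossible for two integer points.
-/

section Projection

variable {E : Type*} [NormedAddCommGroup E] [InnerProductSpace ℝ E]

namespace Submodule

variable (K : Submodule ℝ E) [K.HasOrthogonalProjection]

theorem infDist_eq_norm_sub_starProjection (x : E) :
    Metric.infDist x (K : Set E) = ‖x - K.starProjection x‖ := by
  rw [Metric.infDist_eq_iInf, starProjection_minimal]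
  simp only [dist_eq_norm]
  rfl

theorem infDist_orthogonal_eq_norm_starProjection (x : E) :
    Metric.infDist x (Kᗮ : Set E) = ‖K.starProjection x‖ := by
  rw [infDist_eq_norm_sub_starProjection, starProjection_orthogonal_val, sub_sub_cancel]

theorem inner_eq_inner_starProjection_add_inner_sub (x y : E) :
    ⟪x, y⟫ = ⟪K.starProjection x, K.starProjection y⟫
      + ⟪x - K.starProjection x, y - K.starProjection y⟫ := by
  set P := K.starProjection
  have hxy : ⟪P x, y - P y⟫ = 0 :=
    inner_right_of_mem_orthogonal (K.starProjection_apply_mem x)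
      (K.sub_starProjection_mem_orthogonal y)
  have hyx : ⟪x - P x, P y⟫ = 0 :=
    inner_left_of_mem_orthogonal (K.starProjection_apply_mem y)
      (K.sub_starProjection_mem_orthogonal x)
  conv_lhs => rw [← add_sub_cancel (P x) x, ← add_sub_cancel (P y) y]
  rw [inner_add_left, inner_add_right, inner_add_right, hxy, hyx]
  ring

end Submodule

theorem abs_inner_eq_norm_mul_norm_of_mem_span_singleton {u a b : E}
    (ha : a ∈ Submodule.span ℝ {u}) (hb : b ∈ Submodule.span ℝ {u}) :
    |⟪a, b⟫| = ‖a‖ * ‖b‖ := by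
  obtain ⟨c, rfl⟩ := Submodule.mem_span_singleton.mp ha
  obtain ⟨d, rfl⟩ := Submodule.mem_span_singleton.mp hb
  rw [real_inner_smul_left, real_inner_smul_right, real_inner_self_eq_norm_sq, norm_smul,
    norm_smul, abs_mul, abs_mul, abs_sq, Real.norm_eq_abs, Real.norm_eq_abs]
  ring

theorem abs_abs_inner_sub_infDist_mul_le (u x y : E) :
    |(|⟪x, y⟫| - Metric.infDist x ((Submodule.span ℝ {u})ᗮ : Set E)
        * Metric.infDist y ((Submodule.span ℝ {u})ᗮ : Set E))|
      ≤ Metric.infDist x (Submodule.span ℝ {u} : Set E)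
        * Metric.infDist y (Submodule.span ℝ {u} : Set E) := by
  set K := Submodule.span ℝ {u}
  rw [K.infDist_orthogonal_eq_norm_starProjection, K.infDist_orthogonal_eq_norm_starProjection,
    K.infDist_eq_norm_sub_starProjection, K.infDist_eq_norm_sub_starProjection,
    ← abs_inner_eq_norm_mul_norm_of_mem_span_singleton (K.starProjection_apply_mem x)
      (K.starProjection_apply_mem y),
    K.inner_eq_inner_starProjection_add_inner_sub x y]
  refine (abs_abs_sub_abs_le_abs_sub _ _).trans ?_
  rw [add_sub_cancel_left]
  exact abs_real_inner_le_norm _ _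

end Projection

theorem IsIntegerPoint.exists_inner_eq_intCast {n : ℕ} {x y : EuclideanSpace ℝ (Fin (n+1))}
    (hx : IsIntegerPoint n x) (hy : IsIntegerPoint n y) : ∃ N : ℤ, ⟪x, y⟫ = N := by
  choose a ha using hx
  choose b hb using hy
  refine ⟨∑ i, a i * b i, ?_⟩
  simp [PiLp.inner_apply, ha, hb, mul_comm]

theorem stmt1_general (n : ℕ) (θ : Fin n → ℝ) (t α β : ℝ)
    (ht : 0 < t)
    (v : EuclideanSpace ℝ (Fin (n+1)))
    (hv : IsIntegerPoint n v)
    (hrv : rdist n θ v = t ^ (α - 1 - β))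
    (hhv : hdist n θ v = t ^ α) :
    ∀ x : EuclideanSpace ℝ (Fin (n+1)),
      rdist n θ x < t → t ^ (-β) ≤ hdist n θ x → hdist n θ x ≤ t ^ (-α) - t ^ (-β) →
      ¬ IsIntegerPoint n x := by
  intro x hrx hhx_lo hhx_hi hx
  obtain ⟨N, hN⟩ := hx.exists_inner_eq_intCast hv
  have key : |(|⟪x, v⟫| - hdist n θ x * hdist n θ v)| ≤ rdist n θ x * rdist n θ v :=
    abs_abs_inner_sub_infDist_mul_le (thetaVec n θ) x v
  rw [hN, hhv, hrv] at key
  have hpow_α : 0 < t ^ α := Real.rpow_pos_of_pos ht α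
  have hr_prod : rdist n θ x * t ^ (α - 1 - β) < t ^ (-β) * t ^ α := by
    calc _ < t * t ^ (α - 1 - β) := mul_lt_mul_of_pos_right hrx (Real.rpow_pos_of_pos ht _)
      _ = t ^ (-β) * t ^ α := by
        nth_rewrite 1 [← Real.rpow_one t]
        rw [← Real.rpow_add ht, ← Real.rpow_add ht]
        ring_nf
  have hh_lo := mul_le_mul_of_nonneg_right hhx_lo hpow_α.le
  have hh_hi := mul_le_mul_of_nonneg_right hhx_hi hpow_α.le
  rw [sub_mul, ← Real.rpow_add ht, neg_add_cancel, Real.rpow_zero] at hh_hi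
  have hN_pos : 0 < |(N : ℝ)| := by linarith [(abs_sub_le_iff.1 key).2]
  have hN_lt : |(N : ℝ)| < 1 := by linarith [(abs_sub_le_iff.1 key).1]
  have hN_zero : N = 0 := Int.abs_lt_one_iff.1 (by exact_mod_cast hN_lt)
  simp [hN_zero] at hN_pos

/-- Empty cylinder lemma: if `t^β > 2t^α` and `v ∈ ℤ^{n+1}` satisfies
`r(v) = t^{α-1-β}`, `h(v) = t^α`, then the half-open cylinder
`C = { x : r(x) < t, t^{-β} ≤ h(x) ≤ t^{-α} - t^{-β} }` contains no integer point. -/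
theorem stmt1 (n : ℕ) (hn : 2 ≤ n) (θ : Fin n → ℝ) (t α β : ℝ)
    (ht : 0 < t) (hα : 0 < α) (hβ : 0 < β)
    (htβα : 2 * t ^ α < t ^ β)
    (v : EuclideanSpace ℝ (Fin (n+1)))
    (hv : IsIntegerPoint n v)
    (hrv : rdist n θ v = t ^ (α - 1 - β))
    (hhv : hdist n θ v = t ^ α) :
    ∀ x : EuclideanSpace ℝ (Fin (n+1)),
      rdist n θ x < t → t ^ (-β) ≤ hdist n θ x → hdist n θ x ≤ t ^ (-α) - t ^ (-β) →
      ¬ IsIntegerPoint n x :=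
  stmt1_general n θ t α β ht v hv hrv hhv
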